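/- For n = 3, every off-diagonal Gell-Mann matrix σ_{kl} (k ≠ l) is an eigenvector of the GKSL generator L_{LF}[X] = Σ_{i,j=0}^{2} γ_{ij}(σ_{ij}Xσ_{ij} − ½{σ_{ij}²,X}); for instance L_{LF}[σ_{01}] = −½(4γ_{10}+4γ_{11}+γ̃_{02}+γ̃_{12})σ_{01}, where γ̃_{kl} := γ_{kl}+γ_{lk}. -/

import Mathlib

/-!
Each dissipator `D_A X = A X A - ½ {A², X}` with `A` a Gell-Mann matrix commutes with
transposition and with conjugation by every diagonal sign matrix, because both operations send `A`
to `±A` and `D_{-A} = D_A`. For `k ≠ l`, the matrices that transform under these symmetries like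
`σ_{kl}` (the same sign under transposition, the character `s_k s_l` under sign conjugation)
form the line spanned by `σ_{kl}`, so `D_A σ_{kl}` is a multiple of `σ_{kl}`, in every dimension,
and so is any weighted sum of such dissipators.
The eigenvalue for `σ_{01}` is then read off the `(0, 1)` entries of nine explicit products.
-/

open Matrix BigOperators

/-- The generalized Gell-Mann matrices on `ℂ^n`:
`gm n a b` is `σ_{ab}` (symmetric for `a < b`, antisymmetric for `a > b`,
diagonal for `a = b > 0`, identity for `a = b = 0`). -/
noncomputable def gm (n : ℕ) (a b : Fin n) : Matrix (Fin n) (Fin n) ℂ :=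
  if a < b then Matrix.single a b 1 + Matrix.single b a 1
  else if b < a then (-Complex.I) • (Matrix.single b a 1 - Matrix.single a b 1)
  else if (a : ℕ) = 0 then 1
  else (Real.sqrt (2 / ((a : ℕ) * ((a : ℕ) + 1))) : ℂ) •
    ((∑ i : Fin n, if (i : ℕ) < (a : ℕ) then Matrix.single i i 1 else 0)
      - ((a : ℕ) : ℂ) • Matrix.single a a 1)

namespace Matrix

variable {ι K : Type*} [Field K]

section Dissipator

variable [Fintype ι]

def dissipator (A X : Matrix ι ι K) : Matrix ι ι K :=
  A * X * A - (1 / 2 : K) • (A * A * X + X * (A * A))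

theorem dissipator_smul_left (c : K) (A X : Matrix ι ι K) :
    dissipator (c • A) X = (c * c) • dissipator A X := by
  simp only [dissipator, Matrix.smul_mul, Matrix.mul_smul]
  module

theorem dissipator_smul_right (c : K) (A X : Matrix ι ι K) :
    dissipator A (c • X) = c • dissipator A X := by
  simp only [dissipator, Matrix.smul_mul, Matrix.mul_smul, smul_smul, smul_sub, smul_add,
    mul_comm c]

theorem transpose_dissipator (A X : Matrix ι ι K) :
    (dissipator A X)ᵀ = dissipator Aᵀ Xᵀ := by
  simp only [dissipator, transpose_sub, transpose_smul, transpose_add, transpose_mul,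
    Matrix.mul_assoc, add_comm]

theorem conj_dissipator [DecidableEq ι] {S : Matrix ι ι K} (hS : S * S = 1)
    (A X : Matrix ι ι K) :
    S * dissipator A X * S = dissipator (S * A * S) (S * X * S) := by
  have hS' : ∀ M : Matrix ι ι K, S * (S * M) = M := fun M => by
    rw [← Matrix.mul_assoc, hS, Matrix.one_mul]
  simp only [dissipator, Matrix.mul_sub, Matrix.sub_mul, Matrix.mul_smul, Matrix.smul_mul,
    Matrix.mul_add, Matrix.add_mul, Matrix.mul_assoc, hS']

end Dissipator

section FlipSign

variable [DecidableEq ι]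

variable (K) in
def flipSign (x : ι) : ι → K := fun i => if i = x then -1 else 1

theorem flipSign_mul_self (x i : ι) : flipSign K x i * flipSign K x i = 1 := by
  unfold flipSign; split_ifs <;> norm_num

theorem exists_flipSign_mul_eq_neg {k l p q : ι} (hkl : k ≠ l)
    (hpq : ¬((p = k ∧ q = l) ∨ (p = l ∧ q = k))) :
    ∃ x, flipSign K x p * flipSign K x q = -(flipSign K x k * flipSign K x l) := by
  by_cases hpq' : p = q
  · subst hpq'
    refine ⟨k, ?_⟩
    by_cases hp : p = k <;> simp [flipSign, hp, hkl.symm]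
  by_cases hp : p = k ∨ p = l
  · refine ⟨q, ?_⟩
    have hqk : q ≠ k := by rintro rfl; rcases hp with rfl | rfl <;> tauto
    have hql : q ≠ l := by rintro rfl; rcases hp with rfl | rfl <;> tauto
    simp [flipSign, hpq', Ne.symm hqk, Ne.symm hql]
  · push Not at hp
    exact ⟨p, by simp [flipSign, Ne.symm hpq', Ne.symm hp.1, Ne.symm hp.2]⟩

end FlipSign

def IsSupportedOnPair (M : Matrix ι ι K) (k l : ι) : Prop :=
  ∀ p q, M p q ≠ 0 → (p = k ∧ q = l) ∨ (p = l ∧ q = k)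

theorem IsSupportedOnPair.eq_smul {X Y : Matrix ι ι K} {k l : ι} {τ : K}
    (hY : IsSupportedOnPair Y k l) (hX : IsSupportedOnPair X k l)
    (hYt : Yᵀ = τ • Y) (hXt : Xᵀ = τ • X) (hXkl : X k l ≠ 0) :
    Y = (Y k l / X k l) • X := by
  have hYlk : Y l k = τ * Y k l := by simpa using congrFun (congrFun hYt k) l
  have hXlk : X l k = τ * X k l := by simpa using congrFun (congrFun hXt k) l
  ext p q
  rw [smul_apply, smul_eq_mul]
  by_cases hpq : (p = k ∧ q = l) ∨ (p = l ∧ q = k)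
  · rcases hpq with ⟨rfl, rfl⟩ | ⟨rfl, rfl⟩
    · field_simp
    · rw [hYlk, hXlk]; field_simp
  · have hY0 : Y p q = 0 := by_contra fun h => hpq (hY p q h)
    have hX0 : X p q = 0 := by_contra fun h => hpq (hX p q h)
    rw [hY0, hX0, mul_zero]

section SignConjugation

variable [Fintype ι] [DecidableEq ι]

theorem IsSupportedOnPair.diagonal_conj {M : Matrix ι ι K} {k l : ι}
    (hM : IsSupportedOnPair M k l) (d : ι → K) :
    diagonal d * M * diagonal d = (d k * d l) • M := by
  ext p q
  simp only [mul_diagonal, diagonal_mul, smul_apply, smul_eq_mul]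
  by_cases h : M p q = 0
  · simp [h]
  · rcases hM p q h with ⟨rfl, rfl⟩ | ⟨rfl, rfl⟩ <;> ring

theorem IsDiag.diagonal_conj {M : Matrix ι ι K} (hM : M.IsDiag) {d : ι → K}
    (hd : ∀ i, d i * d i = 1) : diagonal d * M * diagonal d = M := by
  ext p q
  simp only [mul_diagonal, diagonal_mul]
  by_cases h : p = q
  · subst h; rw [mul_right_comm, hd, one_mul]
  · simp [hM h]

theorem exists_diagonal_conj_eq_smul {A : Matrix ι ι K}
    (hA : A.IsDiag ∨ ∃ a b, IsSupportedOnPair A a b) {d : ι → K}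
    (hd : ∀ i, d i * d i = 1) :
    ∃ ε : K, ε * ε = 1 ∧ diagonal d * A * diagonal d = ε • A := by
  rcases hA with hA | ⟨a, b, hA⟩
  · exact ⟨1, one_mul 1, by rw [hA.diagonal_conj hd, one_smul]⟩
  · exact ⟨d a * d b, by linear_combination d b * d b * hd a + hd b, hA.diagonal_conj d⟩

theorem isSupportedOnPair_of_flipSign_conj [NeZero (2 : K)] {Y : Matrix ι ι K} {k l : ι}
    (hkl : k ≠ l)
    (h : ∀ x, diagonal (flipSign K x) * Y * diagonal (flipSign K x) =
      (flipSign K x k * flipSign K x l) • Y) :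
    IsSupportedOnPair Y k l := by
  intro p q hYpq
  by_contra hpq
  obtain ⟨x, hx⟩ := exists_flipSign_mul_eq_neg (K := K) hkl hpq
  have hentry := congrFun (congrFun (h x) p) q
  simp only [mul_diagonal, diagonal_mul, smul_apply, smul_eq_mul] at hentry
  have hsign : flipSign K x k * flipSign K x l ≠ 0 := by
    unfold flipSign; split_ifs <;> norm_num
  have : (2 * (flipSign K x k * flipSign K x l) : K) * Y p q = 0 := by
    linear_combination -hentry + Y p q * hx
  simp_all

theorem dissipator_eq_smul_of_isSupportedOnPair [NeZero (2 : K)] {A X : Matrix ι ι K}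
    {k l : ι} {τ : K} (hkl : k ≠ l)
    (hA : ∀ x, ∃ ε : K, ε * ε = 1 ∧
      diagonal (flipSign K x) * A * diagonal (flipSign K x) = ε • A)
    (hAt : ∃ ε : K, ε * ε = 1 ∧ Aᵀ = ε • A)
    (hX : IsSupportedOnPair X k l) (hXt : Xᵀ = τ • X) (hXkl : X k l ≠ 0) :
    dissipator A X = (dissipator A X k l / X k l) • X := by
  refine IsSupportedOnPair.eq_smul ?_ hX ?_ hXt hXkl
  · refine isSupportedOnPair_of_flipSign_conj hkl fun x => ?_
    obtain ⟨ε, hε, hεA⟩ := hA x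
    have hS : diagonal (flipSign K x) * diagonal (flipSign K x) = 1 := by
      rw [diagonal_mul_diagonal, ← diagonal_one]
      exact congrArg diagonal (funext (flipSign_mul_self x))
    rw [conj_dissipator hS, hεA, hX.diagonal_conj, dissipator_smul_left, hε, one_smul,
      dissipator_smul_right]
  · obtain ⟨ε, hε, hεA⟩ := hAt
    rw [transpose_dissipator, hεA, hXt, dissipator_smul_left, hε, one_smul,
      dissipator_smul_right]

end SignConjugation

end Matrix

section GellMann

variable {n : ℕ}

theorem gm_isDiag (a : Fin n) : (gm n a a).IsDiag := by
  intro p q hpq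
  have hdiag : ∀ c : Fin n, ¬(c = p ∧ c = q) := fun c h => hpq (h.1 ▸ h.2)
  simp [gm, Matrix.sum_apply, Matrix.ite_apply, hdiag, one_apply_ne hpq]

theorem gm_isSupportedOnPair {a b : Fin n} (hab : a ≠ b) :
    IsSupportedOnPair (gm n a b) a b := by
  intro p q h
  contrapose! h
  rcases lt_or_gt_of_ne hab with hab | hab <;>
    simp [gm, hab, not_lt_of_gt hab, single_apply] <;> grind

theorem gm_apply_ne_zero {a b : Fin n} (hab : a ≠ b) : gm n a b a b ≠ 0 := by
  rcases lt_or_gt_of_ne hab with hab | hab <;>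
    simp [gm, hab, not_lt_of_gt hab, hab.ne, hab.ne']

theorem gm_transpose (a b : Fin n) :
    (gm n a b)ᵀ = (if b < a then -1 else 1 : ℂ) • gm n a b := by
  rcases lt_trichotomy a b with hab | rfl | hab
  · simp [gm, hab, not_lt_of_gt hab, transpose_single, add_comm]
  · rw [if_neg (lt_irrefl a), one_smul]
    exact (gm_isDiag a).isSymm
  · simp [gm, hab, not_lt_of_gt hab, transpose_single]
    rw [← smul_neg, neg_sub]

theorem dissipator_gm_eq_smul (a b : Fin n) {k l : Fin n} (hkl : k ≠ l) :
    dissipator (gm n a b) (gm n k l) =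
      (dissipator (gm n a b) (gm n k l) k l / gm n k l k l) • gm n k l := by
  have hA : (gm n a b).IsDiag ∨ ∃ a' b', IsSupportedOnPair (gm n a b) a' b' := by
    by_cases hab : a = b
    · exact Or.inl (hab ▸ gm_isDiag a)
    · exact Or.inr ⟨a, b, gm_isSupportedOnPair hab⟩
  refine dissipator_eq_smul_of_isSupportedOnPair hkl (fun x => exists_diagonal_conj_eq_smul hA
    (flipSign_mul_self x)) ⟨_, ?_, gm_transpose a b⟩ (gm_isSupportedOnPair hkl)
    (gm_transpose k l) (gm_apply_ne_zero hkl)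
  split_ifs <;> norm_num

theorem sum_smul_dissipator_gm_eq_smul (w : Fin n → Fin n → ℂ) {k l : Fin n} (hkl : k ≠ l) :
    ∑ i, ∑ j, w i j • dissipator (gm n i j) (gm n k l) =
      (∑ i, ∑ j, w i j * (dissipator (gm n i j) (gm n k l) k l / gm n k l k l)) •
        gm n k l := by
  simp only [Finset.sum_smul, ← smul_smul]
  exact Finset.sum_congr rfl fun i _ => Finset.sum_congr rfl fun j _ => by
    rw [← dissipator_gm_eq_smul i j hkl]

end GellMann

theorem dissipator_gm_three_gm_zero_one_apply (i j : Fin 3) :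
    dissipator (gm 3 i j) (gm 3 0 1) 0 1 =
      ![![0, 0, -1 / 2], ![-2, -2, -1 / 2], ![-1 / 2, -1 / 2, 0]] i j := by
  fin_cases i <;> fin_cases j <;>
    norm_num [dissipator, gm, mul_apply, Fin.sum_univ_three, single_apply, Fin.lt_def]
  ring

theorem LF_gellMann_three_offdiagonal_eigenvectors (γ : Fin 3 → Fin 3 → ℝ) :
    let L : Matrix (Fin 3) (Fin 3) ℂ → Matrix (Fin 3) (Fin 3) ℂ := fun X =>
      ∑ i, ∑ j, (γ i j : ℂ) •
        (gm 3 i j * X * gm 3 i j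
          - (1 / 2 : ℂ) • (gm 3 i j * gm 3 i j * X + X * (gm 3 i j * gm 3 i j)))
    (∀ k l : Fin 3, k ≠ l → ∃ c : ℂ, L (gm 3 k l) = c • gm 3 k l) ∧
      L (gm 3 0 1) = ((-(1 / 2) *
          (4 * γ 1 0 + 4 * γ 1 1 + (γ 0 2 + γ 2 0) + (γ 1 2 + γ 2 1)) : ℝ) : ℂ) •
        gm 3 0 1 := by
  intro L
  have hL : ∀ X, L X = ∑ i, ∑ j, (γ i j : ℂ) • dissipator (gm 3 i j) X := fun _ => rfl
  refine ⟨fun k l hkl => ⟨_, (hL _).trans (sum_smul_dissipator_gm_eq_smul _ hkl)⟩, ?_⟩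
  rw [hL, sum_smul_dissipator_gm_eq_smul _ (by decide : (0 : Fin 3) ≠ 1)]
  have h01 : gm 3 0 1 0 1 = 1 := by simp [gm]
  simp only [h01, div_one, dissipator_gm_three_gm_zero_one_apply, Fin.sum_univ_three]
  congr 1
  simp only [Matrix.cons_val_zero, Matrix.cons_val_one, Matrix.cons_val_two, Matrix.head_cons,
    Matrix.tail_cons]
  push_cast
  ring
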